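/- arXiv:1503.00932 — 2 statements merged into one kernel-verified Lean document; each statement's English description precedes it below -/
import Mathlib

section
/- Along any affinely parametrized geodesic s ↦ (u(s), v(s), y(s), z(s)) of the Biv pp-wave metric (with z(s) ≠ 0), the function s ↦ z(s)² has constant second derivative, namely d²(z²)/ds² = 2ż² + 4u̇²/z² is constant; equivalently, z(s)² is a quadratic polynomial in the affine parameter s. -/
open scoped BigOperators

noncomputable section

namespace BivPPWave

/-- Partial derivative `∂_σ f` at `x ∈ ℝ⁴`. -/
def pderiv' (f : (Fin 4 → ℝ) → ℝ) (σ : Fin 4) (x : Fin 4 → ℝ) : ℝ :=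
  fderiv ℝ f x (Pi.single σ 1)

/-- The Biv pp-wave metric, coordinates `u = x 0`, `v = x 1`, `y = x 2`, `z = x 3`. -/
def Biv (x : Fin 4 → ℝ) : Fin 4 → Fin 4 → ℝ :=
  ![![-2 / (x 3)^2, -1, 0, 0],
    ![-1, 0, 0, 0],
    ![0, 0, 1, 0],
    ![0, 0, 0, 1]]

/-- Components `G^{αβ}` of the inverse metric. -/
def metricInv (G : (Fin 4 → ℝ) → Fin 4 → Fin 4 → ℝ) (x : Fin 4 → ℝ) :
    Fin 4 → Fin 4 → ℝ :=
  fun α β => (Matrix.of (G x))⁻¹ α β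

/-- Christoffel symbols `Γ^α_{μν}` of the metric `G`. -/
def christoffel (G : (Fin 4 → ℝ) → Fin 4 → Fin 4 → ℝ) (x : Fin 4 → ℝ)
    (α μ ν : Fin 4) : ℝ :=
  (1/2) * ∑ σ, metricInv G x α σ *
    (pderiv' (fun y => G y σ ν) μ x + pderiv' (fun y => G y σ μ) ν x
      - pderiv' (fun y => G y μ ν) σ x)

/-- Derivative of the `i`-th component of a curve. -/
def qd (q : ℝ → Fin 4 → ℝ) (i : Fin 4) (s : ℝ) : ℝ :=
  deriv (fun t => q t i) s

lemma metricInv_biv (x : Fin 4 → ℝ) (hx : x 3 ≠ 0) :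
    metricInv Biv x =
      ![![0,-1,0,0],![-1,2/(x 3)^2,0,0],![0,0,1,0],![0,0,0,1]] := by
  have h : (Matrix.of (Biv x)) *
      (Matrix.of ![![(0:ℝ),-1,0,0],![-1,2/(x 3)^2,0,0],![0,0,1,0],![0,0,0,1]]) = 1 := by
    ext i j
    fin_cases i <;> fin_cases j <;>
      simp [Matrix.mul_apply, Fin.sum_univ_four, Biv, Matrix.one_apply,
        Matrix.vecHead, Matrix.vecTail] <;>
      field_simp <;> ring
  have := Matrix.inv_eq_right_inv h
  funext α β
  simp [metricInv, this]

lemma pderiv_const (c : ℝ) (μ : Fin 4) (x : Fin 4 → ℝ) :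
    pderiv' (fun _ => c) μ x = 0 := by
  simp [pderiv']

lemma hasFDerivAt_entry00 (x : Fin 4 → ℝ) (hx : x 3 ≠ 0) :
    HasFDerivAt (fun y : Fin 4 → ℝ => -2 / (y 3)^2)
      ((4 / (x 3)^3) • (ContinuousLinearMap.proj 3 : (Fin 4 → ℝ) →L[ℝ] ℝ)) x := by
  have hproj : HasFDerivAt (fun y : Fin 4 → ℝ => y 3)
      (ContinuousLinearMap.proj 3 : (Fin 4 → ℝ) →L[ℝ] ℝ) x :=
    (ContinuousLinearMap.proj 3 : (Fin 4 → ℝ) →L[ℝ] ℝ).hasFDerivAt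
  have h1 : HasDerivAt (fun t : ℝ => -2 / t^2) (4 / (x 3)^3) (x 3) := by
    have h2 : HasDerivAt (fun t : ℝ => t^2) (2 * (x 3)) (x 3) := by
      simpa using hasDerivAt_pow 2 (x 3)
    have := (hasDerivAt_const (x 3) (-2 : ℝ)).div h2 (pow_ne_zero 2 hx)
    refine this.congr_deriv ?_
    field_simp
    ring
  exact h1.comp_hasFDerivAt (h₂ := fun t : ℝ => -2 / t^2) (f := fun y : Fin 4 → ℝ => y 3) x hproj

lemma pderiv_entry00 (x : Fin 4 → ℝ) (hx : x 3 ≠ 0) (μ : Fin 4) :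
    pderiv' (fun y => -2 / (y 3)^2) μ x = if μ = 3 then 4 / (x 3)^3 else 0 := by
  rw [pderiv', (hasFDerivAt_entry00 x hx).fderiv]
  simp only [ContinuousLinearMap.coe_smul', Pi.smul_apply, ContinuousLinearMap.proj_apply,
    Pi.single_apply, smul_eq_mul]
  rcases eq_or_ne μ 3 with h | h <;> simp [h, eq_comm]

lemma pderiv_biv (σ ν μ : Fin 4) (x : Fin 4 → ℝ) (hx : x 3 ≠ 0) :
    pderiv' (fun y => Biv y σ ν) μ x =
      if σ = 0 ∧ ν = 0 ∧ μ = 3 then 4 / (x 3)^3 else 0 := by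
  fin_cases σ <;> fin_cases ν <;>
    simp only [Biv, Fin.isValue, Matrix.cons_val', Matrix.cons_val_zero, Matrix.empty_val',
      Matrix.cons_val_fin_one, Matrix.cons_val_one, Matrix.head_cons, Matrix.head_fin_const,
      Matrix.cons_val_two, Matrix.tail_cons, Matrix.cons_val_three, show ((⟨0,by norm_num⟩ : Fin 4) = 0) from rfl,
      show ((⟨1,by norm_num⟩ : Fin 4) = 1) from rfl, show ((⟨2,by norm_num⟩ : Fin 4) = 2) from rfl,
      show ((⟨3,by norm_num⟩ : Fin 4) = 3) from rfl]
  · rw [pderiv_entry00 x hx]; simp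
  all_goals simp [pderiv_const]


set_option maxHeartbeats 2000000 in
lemma christoffel_biv (x : Fin 4 → ℝ) (hx : x 3 ≠ 0) (α μ ν : Fin 4) :
    christoffel Biv x α μ ν =
      if α = 3 ∧ μ = 0 ∧ ν = 0 then -2 / (x 3)^3
      else if α = 1 ∧ ((μ = 0 ∧ ν = 3) ∨ (μ = 3 ∧ ν = 0)) then -2 / (x 3)^3
      else 0 := by
  rw [christoffel, Fin.sum_univ_four, metricInv_biv x hx]
  fin_cases α <;> fin_cases μ <;> fin_cases ν <;>
    · simp only [pderiv_biv _ _ _ x hx, Fin.ext_iff]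
      norm_num [show ((3:Fin 4):ℕ) = 3 from rfl, show ((2:Fin 4):ℕ) = 2 from rfl,
        show ((1:Fin 4):ℕ) = 1 from rfl, show ((0:Fin 4):ℕ) = 0 from rfl, Matrix.cons_val_three, Matrix.cons_val_one, Matrix.cons_val_two, Matrix.cons_val_zero, Matrix.head_cons, Matrix.tail_cons]
      try ring


lemma sum_christoffel0 (x : Fin 4 → ℝ) (hx : x 3 ≠ 0) (a : Fin 4 → ℝ) :
    ∑ μ, ∑ ν, christoffel Biv x 0 μ ν * a μ * a ν = 0 := by
  simp [Fin.sum_univ_four, christoffel_biv x hx]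

lemma sum_christoffel3 (x : Fin 4 → ℝ) (hx : x 3 ≠ 0) (a : Fin 4 → ℝ) :
    ∑ μ, ∑ ν, christoffel Biv x 3 μ ν * a μ * a ν = -2 / (x 3)^3 * (a 0)^2 := by
  simp [Fin.sum_univ_four, christoffel_biv x hx]
  ring

lemma const_of_hasDerivAt_zero {I : Set ℝ} (hI : IsOpen I) (hconv : Convex ℝ I)
    (F : ℝ → ℝ) (hF : ∀ s ∈ I, HasDerivAt F 0 s) :
    ∀ s ∈ I, ∀ t ∈ I, F s = F t := by
  intro s hs t ht
  refine hconv.is_const_of_fderivWithin_eq_zero (f := F)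
    (fun x hx => ((hF x hx).differentiableAt).differentiableWithinAt) ?_ hs ht
  intro x hx
  rw [fderivWithin_of_isOpen hI hx, (hF x hx).hasFDerivAt.fderiv]
  ext y
  simp


/-- Along any affinely parametrized geodesic of the Biv pp-wave metric,
`z²` has constant second derivative `d²(z²)/ds² = 2ż² + 4u̇²/z²`; equivalently, `z(s)²` is a
quadratic polynomial in the affine parameter `s`. -/
theorem biv_geodesic_zsq_quadratic
    (I : Set ℝ) (hI : IsOpen I) (hIconn : I.OrdConnected)
    (q : ℝ → Fin 4 → ℝ) (hq : ContDiffOn ℝ (⊤ : ℕ∞) q I)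
    (hz : ∀ s ∈ I, q s 3 ≠ 0)
    -- the affinely parametrized geodesic equations
    (hgeo : ∀ s ∈ I, ∀ α : Fin 4,
        deriv (deriv (fun t => q t α)) s
          + (∑ μ, ∑ ν, christoffel Biv (q s) α μ ν * qd q μ s * qd q ν s) = 0) :
    -- `d²(z²)/ds² = 2ż² + 4u̇²/z²` …
    (∀ s ∈ I, deriv (deriv (fun t => (q t 3)^2)) s =
        2 * (qd q 3 s)^2 + 4 * (qd q 0 s)^2 / (q s 3)^2)
    -- … is constant …
    ∧ (∀ s₁ ∈ I, ∀ s₂ ∈ I,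
        2 * (qd q 3 s₁)^2 + 4 * (qd q 0 s₁)^2 / (q s₁ 3)^2 =
        2 * (qd q 3 s₂)^2 + 4 * (qd q 0 s₂)^2 / (q s₂ 3)^2)
    -- … equivalently `z(s)²` is a quadratic polynomial in `s`.
    ∧ (∃ a b c : ℝ, ∀ s ∈ I, (q s 3)^2 = a * s^2 + b * s + c) := by
  -- notation
  classical
  have hconv : Convex ℝ I := hIconn.convex
  set z : ℝ → ℝ := fun t => q t 3 with hzdef
  set u : ℝ → ℝ := fun t => q t 0 with hudef
  -- smoothness of components and their derivatives
  have hcomp : ∀ i : Fin 4, ContDiffOn ℝ (⊤ : ℕ∞) (fun s => q s i) I := by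
    intro i
    exact (ContinuousLinearMap.proj (R := ℝ) (φ := fun _ : Fin 4 => ℝ) i).contDiff.comp_contDiffOn hq
  have htop : ((⊤ : ℕ∞) : WithTop ℕ∞) + 1 ≤ ((⊤ : ℕ∞) : WithTop ℕ∞) := by simp
  have hdz : ∀ s ∈ I, HasDerivAt z (deriv z s) s := by
    intro s hs
    exact (((hcomp 3).contDiffAt (hI.mem_nhds hs)).differentiableAt (by simp)).hasDerivAt
  have hdu : ∀ s ∈ I, HasDerivAt u (deriv u s) s := by
    intro s hs
    exact (((hcomp 0).contDiffAt (hI.mem_nhds hs)).differentiableAt (by simp)).hasDerivAt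
  have hz' : ContDiffOn ℝ (⊤ : ℕ∞) (deriv z) I := (hcomp 3).deriv_of_isOpen hI htop
  have hu' : ContDiffOn ℝ (⊤ : ℕ∞) (deriv u) I := (hcomp 0).deriv_of_isOpen hI htop
  have hdz' : ∀ s ∈ I, HasDerivAt (deriv z) (deriv (deriv z) s) s := by
    intro s hs
    exact ((hz'.contDiffAt (hI.mem_nhds hs)).differentiableAt (by simp)).hasDerivAt
  have hdu' : ∀ s ∈ I, HasDerivAt (deriv u) (deriv (deriv u) s) s := by
    intro s hs
    exact ((hu'.contDiffAt (hI.mem_nhds hs)).differentiableAt (by simp)).hasDerivAt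
  -- the geodesic equations in explicit form
  have hueq : ∀ s ∈ I, deriv (deriv u) s = 0 := by
    intro s hs
    have h := hgeo s hs 0
    rw [sum_christoffel0 (q s) (hz s hs) (fun μ => qd q μ s)] at h
    simpa using h
  have hzeq : ∀ s ∈ I, deriv (deriv z) s = 2 * (deriv u s)^2 / (q s 3)^3 := by
    intro s hs
    have h := hgeo s hs 3
    rw [sum_christoffel3 (q s) (hz s hs) (fun μ => qd q μ s)] at h
    have : qd q 0 s = deriv u s := rfl
    rw [this] at h
    have hq3 : (q s 3) ^ 3 ≠ 0 := pow_ne_zero 3 (hz s hs)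
    field_simp at h ⊢
    linarith
  -- first derivative of z²
  have hf1 : ∀ s ∈ I, HasDerivAt (fun t => (q t 3)^2) (2 * z s * deriv z s) s := by
    intro s hs
    have := (hdz s hs).fun_pow 2
    simpa [mul_comm, mul_assoc, mul_left_comm] using this
  have hderivf : ∀ s ∈ I, deriv (fun t => (q t 3)^2) s = 2 * z s * deriv z s := by
    intro s hs
    exact (hf1 s hs).deriv
  -- second derivative of z²
  have hg : ∀ s ∈ I, HasDerivAt (fun t => 2 * z t * deriv z t)
      (2 * deriv z s * deriv z s + 2 * z s * deriv (deriv z) s) s := by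
    intro s hs
    have h1 : HasDerivAt (fun t => 2 * z t) (2 * deriv z s) s := (hdz s hs).const_mul 2
    simpa using h1.fun_mul (hdz' s hs)
  have key1 : ∀ s ∈ I, deriv (deriv (fun t => (q t 3)^2)) s =
      2 * (qd q 3 s)^2 + 4 * (qd q 0 s)^2 / (q s 3)^2 := by
    intro s hs
    have hev : deriv (fun t => (q t 3)^2) =ᶠ[nhds s] (fun t => 2 * z t * deriv z t) := by
      filter_upwards [hI.mem_nhds hs] with t ht
      exact hderivf t ht
    rw [hev.deriv_eq, (hg s hs).deriv]
    have h2 := hzeq s hs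
    have hq3 : q s 3 ≠ 0 := hz s hs
    have hq3' : z s = q s 3 := rfl
    have hqd3 : qd q 3 s = deriv z s := rfl
    have hqd0 : qd q 0 s = deriv u s := rfl
    rw [hqd3, hqd0, h2, hq3']
    field_simp
    ring
  -- the conserved quantity
  set E : ℝ → ℝ := fun t => 2 * (deriv z t)^2 + 4 * (deriv u t)^2 / (q t 3)^2 with hEdef
  have hE0 : ∀ s ∈ I, HasDerivAt E 0 s := by
    intro s hs
    have hq3 : q s 3 ≠ 0 := hz s hs
    have hA : HasDerivAt (fun t => 2 * (deriv z t)^2)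
        (2 * (2 * deriv z s * deriv (deriv z) s)) s := by
      have := (hdz' s hs).fun_pow 2
      simpa [mul_comm, mul_assoc, mul_left_comm] using this.const_mul 2
    have hB : HasDerivAt (fun t => 4 * (deriv u t)^2)
        (4 * (2 * deriv u s * deriv (deriv u) s)) s := by
      have := (hdu' s hs).fun_pow 2
      simpa [mul_comm, mul_assoc, mul_left_comm] using this.const_mul 4
    have hC : HasDerivAt (fun t => ((q t 3)^2)⁻¹)
        (-(2 * z s * deriv z s) / ((q s 3)^2)^2) s := by
      have := ((hdz s hs).fun_pow 2).fun_inv (pow_ne_zero 2 hq3)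
      refine this.congr_deriv ?_
      have : z s = q s 3 := rfl
      rw [this]
      ring
    have hBC : HasDerivAt (fun t => 4 * (deriv u t)^2 * ((q t 3)^2)⁻¹)
        ((4 * (2 * deriv u s * deriv (deriv u) s)) * ((q s 3)^2)⁻¹
          + (4 * (deriv u s)^2) * (-(2 * z s * deriv z s) / ((q s 3)^2)^2)) s := hB.fun_mul hC
    have htotal := hA.add hBC
    have heq : E = fun t => 2 * (deriv z t)^2 + 4 * (deriv u t)^2 * ((q t 3)^2)⁻¹ := by
      funext t
      simp [hEdef, div_eq_mul_inv]
    rw [heq]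
    refine htotal.congr_deriv ?_
    have h2 := hzeq s hs
    have h3 := hueq s hs
    have hq3' : z s = q s 3 := rfl
    rw [h2, h3, hq3']
    field_simp
    ring
  have key2 : ∀ s₁ ∈ I, ∀ s₂ ∈ I,
      2 * (qd q 3 s₁)^2 + 4 * (qd q 0 s₁)^2 / (q s₁ 3)^2 =
      2 * (qd q 3 s₂)^2 + 4 * (qd q 0 s₂)^2 / (q s₂ 3)^2 := by
    intro s₁ hs₁ s₂ hs₂
    exact const_of_hasDerivAt_zero hI hconv E hE0 s₁ hs₁ s₂ hs₂
  refine ⟨key1, key2, ?_⟩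
  -- quadratic polynomial
  rcases Set.eq_empty_or_nonempty I with hIe | ⟨s₀, hs₀⟩
  · exact ⟨0, 0, 0, by intro s hs; rw [hIe] at hs; exact absurd hs (Set.notMem_empty s)⟩
  set C : ℝ := E s₀ with hCdef
  have hEC : ∀ s ∈ I, E s = C := fun s hs =>
    const_of_hasDerivAt_zero hI hconv E hE0 s hs s₀ hs₀
  -- second derivative of z² equals C on I
  have hsecond : ∀ s ∈ I, deriv (deriv (fun t => (q t 3)^2)) s = C := by
    intro s hs
    rw [key1 s hs]
    have h1 : qd q 3 s = deriv z s := rfl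
    have h2 : qd q 0 s = deriv u s := rfl
    rw [h1, h2]
    exact hEC s hs
  -- deriv of z² has derivative C everywhere on I
  have hD1 : ∀ s ∈ I, HasDerivAt (deriv (fun t => (q t 3)^2)) C s := by
    intro s hs
    have hev : deriv (fun t => (q t 3)^2) =ᶠ[nhds s] (fun t => 2 * z t * deriv z t) := by
      filter_upwards [hI.mem_nhds hs] with t ht
      exact hderivf t ht
    have := (hg s hs).congr_of_eventuallyEq hev
    have heq : 2 * deriv z s * deriv z s + 2 * z s * deriv (deriv z) s = C := by
      have h := hsecond s hs
      rwa [hev.deriv_eq, (hg s hs).deriv] at h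
    rwa [heq] at this
  -- F₁ t = deriv(z²) t - C t is constant
  have hF1 : ∀ s ∈ I, HasDerivAt (fun t => deriv (fun r => (q r 3)^2) t - C * t) 0 s := by
    intro s hs
    have := (hD1 s hs).fun_sub ((hasDerivAt_id s).const_mul C)
    simpa using this
  set b : ℝ := deriv (fun r => (q r 3)^2) s₀ - C * s₀ with hbdef
  have hF1c : ∀ s ∈ I, deriv (fun r => (q r 3)^2) s - C * s = b :=
    fun s hs => const_of_hasDerivAt_zero hI hconv _ hF1 s hs s₀ hs₀
  -- F₂ t = z² t - (C/2) t² - b t is constant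
  have hF2 : ∀ s ∈ I, HasDerivAt (fun t => (q t 3)^2 - (C/2) * t^2 - b * t) 0 s := by
    intro s hs
    have h1 : HasDerivAt (fun t : ℝ => (C/2) * t^2) (C * s) s := by
      have := (hasDerivAt_pow 2 s).const_mul (C/2)
      refine this.congr_deriv ?_
      push_cast
      ring
    have h2 : HasDerivAt (fun t : ℝ => b * t) b s := by
      simpa using (hasDerivAt_id s).const_mul b
    have h3 := ((hf1 s hs).sub h1).sub h2
    have h4 : 2 * z s * deriv z s - C * s - b = 0 := by
      have h5 := hF1c s hs
      rw [hderivf s hs] at h5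
      linarith
    rwa [h4] at h3
  set c : ℝ := (q s₀ 3)^2 - (C/2) * s₀^2 - b * s₀ with hcdef
  have hF2c : ∀ s ∈ I, (q s 3)^2 - (C/2) * s^2 - b * s = c :=
    fun s hs => const_of_hasDerivAt_zero hI hconv _ hF2 s hs s₀ hs₀
  refine ⟨C/2, b, c, fun s hs => ?_⟩
  have := hF2c s hs
  linarith


end BivPPWave

end
end

section
/- Let I₁ ≠ 0, I₂, I₃, J₁, J₂ > 0, c_u, c_y, c_v be real constants. Then the curve s ↦ (u(s), v(s), y(s), z(s)) defined by u(s) = −I₁ s + c_u, y(s) = I₃ s + c_y, z(s) = √(((2J₂ s + J₁)² + 8 I₁²)/(4 J₂)), v(s) = √2 · arctan((2J₂ s + J₁)/(2√2 I₁)) − I₂ s + c_v is an affinely parametrized geodesic of the Biv pp-wave metric, i.e. it satisfies q̈^α + Γ^α_{μν}(q) q̇^μ q̇^ν = 0 for all s ∈ ℝ. -/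
/-!
Only `G_uu = -2/z²` depends on the point, so the nonzero Christoffel symbols are
`Γ^z_uu = Γ^v_uz = Γ^v_zu = -2/z³` and the geodesic equations read
`ü = ÿ = 0`, `z̈ = 2u̇²/z³`, `v̈ = 4u̇ż/z³`. Along the curve `u̇ = -I₁` and
`4J₂z² = (2J₂s + J₁)² + 8I₁²`; differentiating this twice gives `z̈ = 2I₁²/z³`, and the
arctan term is chosen so that `v̇ = 2I₁/z² - I₂`, whence `v̈ = -4I₁ż/z³`.
-/

open scoped BigOperators

noncomputable section

namespace BivPPWave

/-- The explicit curve `u(s) = −I₁s + c_u`,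
`v(s) = √2·arctan((2J₂s + J₁)/(2√2 I₁)) − I₂s + c_v`, `y(s) = I₃s + c_y`,
`z(s) = √(((2J₂s + J₁)² + 8I₁²)/(4J₂))`. -/
def geoCurve (I₁ I₂ I₃ J₁ J₂ c_u c_y c_v : ℝ) (s : ℝ) : Fin 4 → ℝ :=
  ![-I₁ * s + c_u,
    Real.sqrt 2 * Real.arctan ((2 * J₂ * s + J₁) / (2 * Real.sqrt 2 * I₁)) - I₂ * s + c_v,
    I₃ * s + c_y,
    Real.sqrt (((2 * J₂ * s + J₁)^2 + 8 * I₁^2) / (4 * J₂))]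

lemma metricInv_Biv (x : Fin 4 → ℝ) (α β : Fin 4) :
    metricInv Biv x α β =
      ![![0, -1, 0, 0], ![-1, 2 / x 3 ^ 2, 0, 0], ![0, 0, 1, 0], ![(0 : ℝ), 0, 0, 1]] α β := by
  have h : Matrix.of (Biv x) *
      Matrix.of ![![0, -1, 0, 0], ![-1, 2 / x 3 ^ 2, 0, 0], ![0, 0, 1, 0], ![(0 : ℝ), 0, 0, 1]]
        = 1 := by
    ext i j
    fin_cases i <;> fin_cases j <;>
      simp [Matrix.mul_apply, Fin.sum_univ_four, Biv]
    ring
  rw [metricInv, Matrix.inv_eq_right_inv h]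
  rfl

lemma hasFDerivAt_Biv_zero_zero (x : Fin 4 → ℝ) (hx : x 3 ≠ 0) :
    HasFDerivAt (fun y => Biv y 0 0)
      ((4 / x 3 ^ 3) • ContinuousLinearMap.proj (R := ℝ) (φ := fun _ : Fin 4 => ℝ) 3) x := by
  have hinv : HasDerivAt (fun t : ℝ => -2 / t ^ 2) (4 / x 3 ^ 3) (x 3) := by
    refine ((hasDerivAt_const _ _).div (hasDerivAt_pow 2 (x 3)) (pow_ne_zero 2 hx)).congr_deriv ?_
    field_simp
    ring
  exact hinv.comp_hasFDerivAt (f := fun y : Fin 4 → ℝ => y 3) x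
    (ContinuousLinearMap.proj (R := ℝ) (φ := fun _ : Fin 4 => ℝ) 3).hasFDerivAt

lemma pderiv_Biv (x : Fin 4 → ℝ) (hx : x 3 ≠ 0) (σ ν μ : Fin 4) :
    pderiv' (fun y => Biv y σ ν) μ x =
      if σ = 0 ∧ ν = 0 ∧ μ = 3 then 4 / x 3 ^ 3 else 0 := by
  by_cases huu : σ = 0 ∧ ν = 0
  · obtain ⟨rfl, rfl⟩ := huu
    rw [pderiv', (hasFDerivAt_Biv_zero_zero x hx).fderiv]
    fin_cases μ <;> simp
  · have hconst : (fun y => Biv y σ ν) = fun _ => Biv 0 σ ν := by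
      funext y
      fin_cases σ <;> fin_cases ν <;> simp_all [Biv]
    rw [pderiv', hconst, fderiv_const_apply, if_neg (by tauto)]
    rfl

lemma christoffel_Biv (x : Fin 4 → ℝ) (hx : x 3 ≠ 0) (α μ ν : Fin 4) :
    christoffel Biv x α μ ν =
      if (α = 3 ∧ μ = 0 ∧ ν = 0) ∨ (α = 1 ∧ ((μ = 0 ∧ ν = 3) ∨ (μ = 3 ∧ ν = 0)))
      then -2 / x 3 ^ 3 else 0 := by
  simp only [christoffel, Fin.sum_univ_four, metricInv_Biv x, pderiv_Biv x hx]
  fin_cases α <;> fin_cases μ <;> fin_cases ν <;> simp <;> ring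

lemma sum_christoffel_Biv_mul (x w : Fin 4 → ℝ) (hx : x 3 ≠ 0) (α : Fin 4) :
    ∑ μ, ∑ ν, christoffel Biv x α μ ν * w μ * w ν =
      ![0, -4 * w 0 * w 3 / x 3 ^ 3, 0, -2 * w 0 ^ 2 / x 3 ^ 3] α := by
  simp only [Fin.sum_univ_four, christoffel_Biv x hx]
  fin_cases α <;> simp <;> ring

def geoZ (I₁ J₁ J₂ s : ℝ) : ℝ :=
  Real.sqrt (((2 * J₂ * s + J₁) ^ 2 + 8 * I₁ ^ 2) / (4 * J₂))

def geoVelocity (I₁ I₂ I₃ J₁ J₂ s : ℝ) : Fin 4 → ℝ :=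
  ![-I₁, 2 * I₁ / geoZ I₁ J₁ J₂ s ^ 2 - I₂, I₃, (2 * J₂ * s + J₁) / (2 * geoZ I₁ J₁ J₂ s)]

def geoAcceleration (I₁ J₁ J₂ s : ℝ) : Fin 4 → ℝ :=
  ![0, -2 * I₁ * (2 * J₂ * s + J₁) / geoZ I₁ J₁ J₂ s ^ 4, 0, 2 * I₁ ^ 2 / geoZ I₁ J₁ J₂ s ^ 3]

section Curve

variable {I₁ I₂ I₃ J₁ J₂ c_u c_y c_v : ℝ}

lemma geoCurve_three (s : ℝ) : geoCurve I₁ I₂ I₃ J₁ J₂ c_u c_y c_v s 3 = geoZ I₁ J₁ J₂ s := rfl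

lemma geoZ_pos (hI₁ : I₁ ≠ 0) (hJ₂ : 0 < J₂) (s : ℝ) : 0 < geoZ I₁ J₁ J₂ s :=
  Real.sqrt_pos.mpr (by positivity)

lemma four_mul_mul_geoZ_sq (hJ₂ : 0 < J₂) (s : ℝ) :
    4 * J₂ * geoZ I₁ J₁ J₂ s ^ 2 = (2 * J₂ * s + J₁) ^ 2 + 8 * I₁ ^ 2 := by
  rw [geoZ, Real.sq_sqrt (by positivity)]
  field_simp

lemma hasDerivAt_geoZ (hI₁ : I₁ ≠ 0) (hJ₂ : 0 < J₂) (s : ℝ) :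
    HasDerivAt (geoZ I₁ J₁ J₂) ((2 * J₂ * s + J₁) / (2 * geoZ I₁ J₁ J₂ s)) s := by
  have hrad : HasDerivAt (fun t => ((2 * J₂ * t + J₁) ^ 2 + 8 * I₁ ^ 2) / (4 * J₂))
      (2 * J₂ * s + J₁) s := by
    have hlin : HasDerivAt (fun t => 2 * J₂ * t + J₁) (2 * J₂) s := by
      simpa using ((hasDerivAt_id s).const_mul (2 * J₂)).add_const J₁
    refine (((hlin.pow 2).add_const _).div_const _).congr_deriv ?_
    field_simp
    ring
  refine ((Real.hasDerivAt_sqrt (by positivity)).comp s hrad).congr_deriv ?_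
  rw [geoZ]
  ring

lemma hasDerivAt_geoCurve_one (hI₁ : I₁ ≠ 0) (hJ₂ : 0 < J₂) (s : ℝ) :
    HasDerivAt (fun t => geoCurve I₁ I₂ I₃ J₁ J₂ c_u c_y c_v t 1)
      (2 * I₁ / geoZ I₁ J₁ J₂ s ^ 2 - I₂) s := by
  have harg : HasDerivAt (fun t => (2 * J₂ * t + J₁) / (2 * Real.sqrt 2 * I₁))
      (2 * J₂ / (2 * Real.sqrt 2 * I₁)) s := by
    simpa using (((hasDerivAt_id s).const_mul (2 * J₂)).add_const J₁).div_const _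
  have h := (((harg.arctan).const_mul (Real.sqrt 2)).sub
    ((hasDerivAt_id s).const_mul I₂)).add_const c_v
  refine h.congr_deriv ?_
  have hz := four_mul_mul_geoZ_sq (I₁ := I₁) (J₁ := J₁) hJ₂ s
  have hz0 := (geoZ_pos (J₁ := J₁) hI₁ hJ₂ s).ne'
  have h2 : Real.sqrt 2 ^ 2 = 2 := Real.sq_sqrt (by norm_num)
  field_simp
  linear_combination (2 * I₁) * hz + (4 * J₂ * I₁ * geoZ I₁ J₁ J₂ s ^ 2 - 8 * I₁ ^ 3) * h2

lemma hasDerivAt_geoCurve (hI₁ : I₁ ≠ 0) (hJ₂ : 0 < J₂) (s : ℝ) (α : Fin 4) :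
    HasDerivAt (fun t => geoCurve I₁ I₂ I₃ J₁ J₂ c_u c_y c_v t α)
      (geoVelocity I₁ I₂ I₃ J₁ J₂ s α) s := by
  fin_cases α
  · simpa [geoCurve, geoVelocity] using ((hasDerivAt_id s).const_mul (-I₁)).add_const c_u
  · exact hasDerivAt_geoCurve_one hI₁ hJ₂ s
  · simpa [geoCurve, geoVelocity] using ((hasDerivAt_id s).const_mul I₃).add_const c_y
  · exact hasDerivAt_geoZ hI₁ hJ₂ s

lemma hasDerivAt_geoVelocity (hI₁ : I₁ ≠ 0) (hJ₂ : 0 < J₂) (s : ℝ) (α : Fin 4) :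
    HasDerivAt (fun t => geoVelocity I₁ I₂ I₃ J₁ J₂ t α) (geoAcceleration I₁ J₁ J₂ s α) s := by
  have hz := hasDerivAt_geoZ (J₁ := J₁) hI₁ hJ₂ s
  have hz0 := (geoZ_pos (J₁ := J₁) hI₁ hJ₂ s).ne'
  fin_cases α
  · exact hasDerivAt_const s _
  · refine (((hasDerivAt_const s (2 * I₁)).div (hz.pow 2) (pow_ne_zero 2 hz0)).sub_const
      I₂).congr_deriv ?_
    simp only [geoAcceleration, Pi.pow_apply, Fin.mk_one, Matrix.cons_val_one,
      Matrix.cons_val_zero]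
    field_simp
    ring
  · exact hasDerivAt_const s _
  · have hlin : HasDerivAt (fun t => 2 * J₂ * t + J₁) (2 * J₂) s := by
      simpa using ((hasDerivAt_id s).const_mul (2 * J₂)).add_const J₁
    refine (hlin.div (hz.const_mul 2) (by positivity)).congr_deriv ?_
    have hsq := four_mul_mul_geoZ_sq (I₁ := I₁) (J₁ := J₁) hJ₂ s
    simp only [geoAcceleration, Fin.reduceFinMk, Matrix.cons_val]
    field_simp
    linear_combination hsq

end Curve

/-- The explicit curve `geoCurve` is an affinely parametrized geodesic of
the Biv pp-wave metric: it satisfies `q̈^α + Γ^α_{μν}(q) q̇^μ q̇^ν = 0` for all `s ∈ ℝ`. -/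
theorem biv_explicit_geodesic
    (I₁ I₂ I₃ J₁ J₂ c_u c_y c_v : ℝ) (hI₁ : I₁ ≠ 0) (hJ₂ : 0 < J₂) :
    ∀ s : ℝ, ∀ α : Fin 4,
      deriv (deriv (fun t => geoCurve I₁ I₂ I₃ J₁ J₂ c_u c_y c_v t α)) s
        + (∑ μ, ∑ ν, christoffel Biv (geoCurve I₁ I₂ I₃ J₁ J₂ c_u c_y c_v s) α μ ν
            * qd (geoCurve I₁ I₂ I₃ J₁ J₂ c_u c_y c_v) μ s
            * qd (geoCurve I₁ I₂ I₃ J₁ J₂ c_u c_y c_v) ν s) = 0 := by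
  intro s α
  have hvel : ∀ μ t, qd (geoCurve I₁ I₂ I₃ J₁ J₂ c_u c_y c_v) μ t
      = geoVelocity I₁ I₂ I₃ J₁ J₂ t μ := fun μ t => (hasDerivAt_geoCurve hI₁ hJ₂ t μ).deriv
  have hacc : deriv (deriv (fun t => geoCurve I₁ I₂ I₃ J₁ J₂ c_u c_y c_v t α)) s
      = geoAcceleration I₁ J₁ J₂ s α := by
    rw [show deriv (fun t => geoCurve I₁ I₂ I₃ J₁ J₂ c_u c_y c_v t α)
        = fun t => geoVelocity I₁ I₂ I₃ J₁ J₂ t α from funext (hvel α)]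
    exact (hasDerivAt_geoVelocity hI₁ hJ₂ s α).deriv
  have hz0 := (geoZ_pos (J₁ := J₁) hI₁ hJ₂ s).ne'
  rw [hacc, funext₂ hvel, sum_christoffel_Biv_mul _ _ hz0, geoCurve_three]
  fin_cases α <;> simp [geoAcceleration, geoVelocity] <;> field_simp <;> ring

end BivPPWave

end
end
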